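/- Let L be a lattice with negative definite symmetric bilinear form (·,·) with (E_i,E_j) ≥ 0 for i ≠ j. For any l' ∈ L' (the dual lattice, viewed inside L⊗Q), there exists a unique minimal effective element l_{l'} ∈ L (with respect to the coordinatewise partial order) such that l' − l_{l'} ∈ NE_Q := {x : (x, E_j) ≥ 0 for all j}. -/

import Mathlib

/-!
The set of effective integral `l` with `l' - l ∈ NE_ℚ` is closed under coordinatewise `min`:
if `l₁ j ≤ l₂ j`, then `l₁ - l₁ ⊓ l₂` is effective and vanishes at `j`, so by the sign condition
on the off-diagonal entries it pairs nonnegatively with `E_j`, and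
`(l' - l₁ ⊓ l₂, E_j) ≥ (l' - l₁, E_j) ≥ 0`. A nonempty `min`-closed set of effective integral
vectors has a least element, namely one with minimal coordinate sum. Nonemptiness comes from
negative definiteness: the form is nondegenerate, so some `w` has `(w, E_j) = -1` for all `j`;
such a `w` is effective, and a large integral multiple of it lies in the set.
-/

open Matrix

variable {J : Type*}

/-- The rational bilinear (intersection) form associated with the integral matrix `B`. -/
def bform [Fintype J] (B : Matrix J J ℤ) (x y : J → ℚ) : ℚ :=
  x ⬝ᵥ (B.map (fun n => (n : ℚ))).mulVec y

/-- `B` is negative definite as a rational quadratic form. -/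
def NegDef [Fintype J] (B : Matrix J J ℤ) : Prop :=
  ∀ x : J → ℚ, x ≠ 0 → bform B x x < 0

/-- Membership in the lattice `L` (integral coordinates in the basis `E_j`). -/
def isLat (x : J → ℚ) : Prop := ∀ j, ∃ m : ℤ, x j = (m : ℚ)

/-- Membership in the dual lattice `L' ⊂ L ⊗ ℚ`. -/
def isDual [Fintype J] [DecidableEq J] (B : Matrix J J ℤ) (x : J → ℚ) : Prop :=
  ∀ j, ∃ m : ℤ, bform B x (Pi.single j 1) = (m : ℚ)

/-- Membership in the anti-nef cone `NE_ℚ = {x : (x,E_j) ≥ 0 ∀ j}`. -/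
def inNE [Fintype J] [DecidableEq J] (B : Matrix J J ℤ) (x : J → ℚ) : Prop :=
  ∀ j, 0 ≤ bform B x (Pi.single j 1)

/-- Effective rational cycles: all coordinates nonnegative. -/
def Effective (x : J → ℚ) : Prop := ∀ j, 0 ≤ x j

/-- `χ(x) = -(x, x+K)/2` (Riemann–Roch). -/
def chi [Fintype J] (B : Matrix J J ℤ) (K x : J → ℚ) : ℚ := -(bform B x (x + K)) / 2

section Lattice

lemma isLat_inf {x y : J → ℚ} (hx : isLat x) (hy : isLat y) : isLat (x ⊓ y) := by
  intro j
  obtain ⟨a, ha⟩ := hx j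
  obtain ⟨b, hb⟩ := hy j
  exact ⟨min a b, by simp [ha, hb]⟩

lemma isLat_nsmul {x : J → ℚ} (hx : isLat x) (n : ℕ) : isLat (n • x) := by
  intro j
  obtain ⟨a, ha⟩ := hx j
  exact ⟨n * a, by simp [ha]⟩

lemma isLat_prod_den_nsmul [Fintype J] (x : J → ℚ) : isLat ((∏ j, (x j).den) • x) := by
  intro j
  obtain ⟨k, hk⟩ := Finset.dvd_prod_of_mem (fun i => (x i).den) (Finset.mem_univ j)
  refine ⟨k * (x j).num, ?_⟩
  rw [Pi.smul_apply, hk, nsmul_eq_mul]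
  push_cast
  rw [mul_comm _ (k : ℚ), mul_assoc, Rat.den_mul_eq_num]

lemma Effective.inf {x y : J → ℚ} (hx : Effective x) (hy : Effective y) : Effective (x ⊓ y) :=
  fun j => le_min (hx j) (hy j)

lemma Effective.nsmul {x : J → ℚ} (hx : Effective x) (n : ℕ) : Effective (n • x) :=
  fun j => nsmul_nonneg (hx j) n

end Lattice

section Form

variable [Fintype J] {B : Matrix J J ℤ}

lemma bform_eq_vecMul_dotProduct (x y : J → ℚ) :
    bform B x y = x ᵥ* B.map (Int.cast : ℤ → ℚ) ⬝ᵥ y :=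
  dotProduct_mulVec _ _ _

lemma bform_single [DecidableEq J] (x : J → ℚ) (j : J) :
    bform B x (Pi.single j 1) = (x ᵥ* B.map (Int.cast : ℤ → ℚ)) j := by
  rw [bform_eq_vecMul_dotProduct, dotProduct_single, mul_one]

lemma bform_add_left (x y z : J → ℚ) :
    bform B (x + y) z = bform B x z + bform B y z :=
  add_dotProduct _ _ _

lemma bform_sub_left (x y z : J → ℚ) :
    bform B (x - y) z = bform B x z - bform B y z :=
  sub_dotProduct _ _ _

lemma bform_nsmul_left (n : ℕ) (x y : J → ℚ) :
    bform B (n • x) y = n * bform B x y := by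
  rw [bform, smul_dotProduct, nsmul_eq_mul, ← bform]

lemma bform_eq_sum (x y : J → ℚ) :
    bform B x y = ∑ i, ∑ j, x i * B i j * y j := by
  simp [bform, dotProduct, mulVec, Finset.mul_sum, mul_assoc]

lemma bform_nonneg_of_disjoint (hoff : ∀ i j, i ≠ j → 0 ≤ B i j) {x y : J → ℚ}
    (hx : Effective x) (hy : Effective y) (hxy : ∀ j, x j * y j = 0) : 0 ≤ bform B x y := by
  rw [bform_eq_sum]
  refine Finset.sum_nonneg fun i _ => Finset.sum_nonneg fun j _ => ?_
  rcases eq_or_ne i j with rfl | hij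
  · rw [mul_right_comm, hxy, zero_mul]
  · exact mul_nonneg (mul_nonneg (hx i) (by exact_mod_cast hoff i j hij)) (hy j)

lemma inNE_sub_inf [DecidableEq J] (hoff : ∀ i j, i ≠ j → 0 ≤ B i j) {l' x y : J → ℚ}
    (hx : inNE B (l' - x)) (hy : inNE B (l' - y)) : inNE B (l' - x ⊓ y) := by
  intro j
  wlog hxy : x j ≤ y j generalizing x y
  · rw [inf_comm]
    exact this hy hx (le_of_not_ge hxy)
  have hgap : 0 ≤ bform B (x - x ⊓ y) (Pi.single j 1) := by
    refine bform_nonneg_of_disjoint hoff (fun i => sub_nonneg.2 (inf_le_left (b := y) i))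
      (fun i => ?_) (fun i => ?_)
    · rcases eq_or_ne i j with rfl | hij <;> simp [*]
    · rcases eq_or_ne i j with rfl | hij <;> simp [*]
  rw [show l' - x ⊓ y = (l' - x) + (x - x ⊓ y) by abel, bform_add_left]
  linarith [hx j]

/-- The negative part `n` of `w` satisfies `(n, n) = (w⁺, n) - (w, n) ≥ 0`, hence vanishes. -/
lemma effective_of_bform_single_nonpos [DecidableEq J] (hneg : NegDef B)
    (hoff : ∀ i j, i ≠ j → 0 ≤ B i j) {w : J → ℚ}
    (hw : ∀ j, bform B w (Pi.single j 1) ≤ 0) : Effective w := by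
  have hpos_neg : 0 ≤ bform B w⁺ w⁻ := by
    refine bform_nonneg_of_disjoint hoff (fun i => posPart_nonneg (w i))
      (fun i => negPart_nonneg (w i)) (fun i => ?_)
    rcases le_total 0 (w i) with h | h <;> simp [h]
  have hw_neg : bform B w w⁻ ≤ 0 := by
    rw [bform_eq_vecMul_dotProduct]
    refine Finset.sum_nonpos fun i _ => mul_nonpos_of_nonpos_of_nonneg ?_ (negPart_nonneg (w i))
    rw [← bform_single]
    exact hw i
  have hsplit : bform B w⁻ w⁻ = bform B w⁺ w⁻ - bform B w w⁻ := by
    rw [← bform_sub_left]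
    congr 1
    rw [← sub_sub_cancel w⁺ w⁻, posPart_sub_negPart]
  have hnn : w⁻ = 0 := by
    by_contra hne
    linarith [hneg _ hne]
  exact fun j => negPart_eq_zero.1 (congrFun hnn j)

lemma exists_isLat_effective_bform_single_le [DecidableEq J] (hneg : NegDef B)
    (hoff : ∀ i j, i ≠ j → 0 ≤ B i j) :
    ∃ u : J → ℚ, isLat u ∧ Effective u ∧ ∀ j, bform B u (Pi.single j 1) ≤ -1 := by
  have hinj : Function.Injective (B.map (Int.cast : ℤ → ℚ)).vecMulLinear := by
    refine (injective_iff_map_eq_zero _).2 fun x hx => ?_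
    by_contra hne
    have hzero : bform B x x = 0 := by
      rw [bform_eq_vecMul_dotProduct]
      simp [show x ᵥ* B.map (Int.cast : ℤ → ℚ) = 0 from hx]
    linarith [hneg x hne]
  obtain ⟨w, hw⟩ := LinearMap.surjective_of_injective hinj (fun _ => -1)
  have hw_single (j : J) : bform B w (Pi.single j 1) = -1 := by
    rw [bform_single]
    exact congrFun hw j
  have hw_eff : Effective w :=
    effective_of_bform_single_nonpos hneg hoff fun j => by rw [hw_single]; norm_num
  set N := ∏ j, (w j).den
  have hN : 1 ≤ N := Finset.one_le_prod' fun j _ => (w j).den_pos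
  refine ⟨N • w, isLat_prod_den_nsmul w, hw_eff.nsmul N, fun j => ?_⟩
  rw [bform_nsmul_left, hw_single]
  have : (1 : ℚ) ≤ N := by exact_mod_cast hN
  linarith

lemma exists_isLat_effective_inNE_sub [DecidableEq J] (hneg : NegDef B)
    (hoff : ∀ i j, i ≠ j → 0 ≤ B i j) (l' : J → ℚ) :
    ∃ l : J → ℚ, isLat l ∧ Effective l ∧ inNE B (l' - l) := by
  obtain ⟨u, hu_lat, hu_eff, hu⟩ := exists_isLat_effective_bform_single_le hneg hoff
  obtain ⟨t, ht⟩ := Finite.exists_le fun j => ⌈-bform B l' (Pi.single j 1)⌉₊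
  refine ⟨t • u, isLat_nsmul hu_lat t, hu_eff.nsmul t, fun j => ?_⟩
  have hlt : -bform B l' (Pi.single j 1) ≤ t :=
    (Nat.le_ceil _).trans (by exact_mod_cast ht j)
  have hu_t : (t : ℚ) * bform B u (Pi.single j 1) ≤ t * -1 :=
    mul_le_mul_of_nonneg_left (hu j) t.cast_nonneg
  rw [bform_sub_left, bform_nsmul_left]
  linarith

end Form

section Least

variable [Fintype J]

lemma sum_floor_toNat_lt {x y : J → ℚ} (hx : Effective x) (hy : isLat y) (hxy : x < y) :
    ∑ j, ⌊x j⌋.toNat < ∑ j, ⌊y j⌋.toNat := by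
  obtain ⟨hle, j, hj⟩ := Pi.lt_def.1 hxy
  refine Finset.sum_lt_sum (fun i _ => Int.toNat_le_toNat (Int.floor_mono (hle i)))
    ⟨j, Finset.mem_univ j, ?_⟩
  obtain ⟨m, hm⟩ := hy j
  have hfloor_lt : ⌊x j⌋ < m := Int.floor_lt.2 (hm ▸ hj)
  have hfloor_nonneg : 0 ≤ ⌊x j⌋ := Int.floor_nonneg.2 (hx j)
  rw [hm, Int.floor_intCast]
  omega

lemma exists_isLeast_of_inf_mem {S : Set (J → ℚ)} (hne : S.Nonempty)
    (hlat : ∀ l ∈ S, isLat l) (heff : ∀ l ∈ S, Effective l)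
    (hinf : ∀ x ∈ S, ∀ y ∈ S, x ⊓ y ∈ S) : ∃ m, IsLeast S m := by
  obtain ⟨m, hmS, hmin⟩ :=
    (InvImage.wf (fun l : J → ℚ => ∑ j, ⌊l j⌋.toNat) wellFounded_lt).has_min S hne
  refine ⟨m, hmS, fun l hl => ?_⟩
  have hinf_mem := hinf m hmS l hl
  have hinf_eq : m ⊓ l = m := (inf_le_left : m ⊓ l ≤ m).eq_of_not_lt fun hlt =>
    hmin _ hinf_mem (sum_floor_toNat_lt (heff _ hinf_mem) (hlat m hmS) hlt)
  exact inf_eq_left.1 hinf_eq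

end Least

theorem stmt2_general {J : Type*} [Fintype J] [DecidableEq J]
    (B : Matrix J J ℤ)
    (hneg : NegDef B)
    (hoff : ∀ i j, i ≠ j → 0 ≤ B i j)
    (l' : J → ℚ) :
    ∃! l : J → ℚ, isLat l ∧ Effective l ∧ inNE B (l' - l) ∧
      ∀ l₂ : J → ℚ, isLat l₂ → Effective l₂ → inNE B (l' - l₂) → l ≤ l₂ := by
  obtain ⟨m, ⟨hm_lat, hm_eff, hm_NE⟩, hm_least⟩ :=
    exists_isLeast_of_inf_mem (S := {l | isLat l ∧ Effective l ∧ inNE B (l' - l)})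
      (exists_isLat_effective_inNE_sub hneg hoff l') (fun _ hl => hl.1) (fun _ hl => hl.2.1)
      fun _ hx _ hy => ⟨isLat_inf hx.1 hy.1, hx.2.1.inf hy.2.1, inNE_sub_inf hoff hx.2.2 hy.2.2⟩
  refine ⟨m, ⟨hm_lat, hm_eff, hm_NE, fun l₂ h_lat h_eff h_NE => hm_least ⟨h_lat, h_eff, h_NE⟩⟩, ?_⟩
  rintro l ⟨hl_lat, hl_eff, hl_NE, hl_least⟩
  exact le_antisymm (hl_least m hm_lat hm_eff hm_NE) (hm_least ⟨hl_lat, hl_eff, hl_NE⟩)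

/-- existence and uniqueness of the minimal effective cycle
`l_{l'} ∈ L` with `l' - l_{l'} ∈ NE_ℚ`. -/
theorem stmt2 {J : Type*} [Fintype J] [DecidableEq J]
    (B : Matrix J J ℤ)
    (hsym : B.IsSymm)
    (hneg : NegDef B)
    (hoff : ∀ i j, i ≠ j → 0 ≤ B i j)
    (l' : J → ℚ) (hl' : isDual B l') :
    ∃! l : J → ℚ, isLat l ∧ Effective l ∧ inNE B (l' - l) ∧
      ∀ l₂ : J → ℚ, isLat l₂ → Effective l₂ → inNE B (l' - l₂) → l ≤ l₂ :=
  stmt2_general B hneg hoff l'
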